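/- Let f ∈ ℝ^n be a probability vector (f_i ≥ 0, ∑_i f_i = 1) with f_{j₀} ≥ 1/2 for some index j₀, and f_i ≤ 2^β/n for i ≠ j₀. Let σ ∈ {-1,+1}^n be uniformly random. If C·√(log(n/δ)/n)·2^β ≤ 0.1, then Pr[⟨f, σ⟩ ≥ 1/3] ≥ 1/4. -/
import Mathlib


open Finset
open scoped Classical

theorem stmt_6 :
    ∃ C : ℝ, 0 < C ∧
    ∀ (n : ℕ), 0 < n →
    ∀ (f : Fin n → ℝ), (∀ i, 0 ≤ f i) → (∑ i, f i) = 1 →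
    ∀ (j₀ : Fin n), 1 / 2 ≤ f j₀ →
    ∀ (β δ : ℝ), (∀ i, i ≠ j₀ → f i ≤ 2 ^ β / n) →
    δ ∈ Set.Ioo (0:ℝ) 0.1 →
    C * Real.sqrt (Real.log (n / δ) / n) * 2 ^ β ≤ 0.1 →
    (1 : ℝ) / 4 ≤
      ((Finset.univ.filter (fun σ : Fin n → Bool =>
        (1 : ℝ) / 3 ≤ ∑ i, f i * (if σ i then (1:ℝ) else -1))).card : ℝ)
        / 2 ^ n := by
  refine ⟨1, one_pos, ?_⟩
  intro n hn f hf hsum j₀ hj₀ β δ hβ hδ hC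
  set g : (Fin n → Bool) → ℝ :=
    fun σ => ∑ i ∈ Finset.univ.erase j₀, f i * (if σ i then (1:ℝ) else -1) with hg
  set T := Finset.univ.filter (fun σ : Fin n → Bool =>
      (1:ℝ)/3 ≤ ∑ i, f i * (if σ i then (1:ℝ) else -1)) with hT
  set A := Finset.univ.filter (fun σ : Fin n → Bool => σ j₀ = true ∧ 0 ≤ g σ) with hA
  set A' := Finset.univ.filter (fun σ : Fin n → Bool => σ j₀ = true ∧ g σ ≤ 0) with hA'
  set B := Finset.univ.filter (fun σ : Fin n → Bool => σ j₀ = true) with hB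
  set B' := Finset.univ.filter (fun σ : Fin n → Bool => ¬ (σ j₀ = true)) with hB'
  -- the flip map
  set φ : (Fin n → Bool) → (Fin n → Bool) := fun σ i => if i = j₀ then σ i else !(σ i) with hφ
  have hφφ : ∀ σ, φ (φ σ) = σ := by
    intro σ; funext i; by_cases h : i = j₀ <;> simp [hφ, h]
  have hgφ : ∀ σ, g (φ σ) = - g σ := by
    intro σ
    rw [hg, ← Finset.sum_neg_distrib]
    refine Finset.sum_congr rfl ?_
    intro i hi
    have hij : i ≠ j₀ := (Finset.mem_erase.mp hi).1
    simp only [hφ, if_neg hij]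
    cases σ i <;> simp <;> ring
  -- A ⊆ T
  have hAT : A ⊆ T := by
    intro σ hσ
    simp only [hA, mem_filter, mem_univ, true_and] at hσ
    simp only [hT, mem_filter, mem_univ, true_and]
    have hs : ∑ i, f i * (if σ i then (1:ℝ) else -1)
        = f j₀ * (if σ j₀ then (1:ℝ) else -1) + g σ :=
      (Finset.add_sum_erase _ _ (mem_univ j₀)).symm
    rw [hs, hσ.1, if_pos rfl]
    linarith [hσ.2, hj₀]
  -- card A' = card A
  have hcardAA' : A'.card = A.card := by
    refine Finset.card_bij' (fun σ _ => φ σ) (fun σ _ => φ σ) ?_ ?_ ?_ ?_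
    · intro σ hσ
      simp only [hA', mem_filter, mem_univ, true_and] at hσ
      simp only [hA, mem_filter, mem_univ, true_and]
      constructor
      · simp [hφ, hσ.1]
      · rw [hgφ]; linarith [hσ.2]
    · intro σ hσ
      simp only [hA, mem_filter, mem_univ, true_and] at hσ
      simp only [hA', mem_filter, mem_univ, true_and]
      constructor
      · simp [hφ, hσ.1]
      · rw [hgφ]; linarith [hσ.2]
    · intro σ _; exact hφφ σ
    · intro σ _; exact hφφ σ
  -- B ⊆ A ∪ A'
  have hBAA' : B ⊆ A ∪ A' := by
    intro σ hσ
    simp only [hB, mem_filter, mem_univ, true_and] at hσ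
    rcases le_total 0 (g σ) with h | h
    · exact Finset.mem_union_left _ (by simp [hA, hσ, h])
    · exact Finset.mem_union_right _ (by simp [hA', hσ, h])
  -- card B = card B'
  have hcardBB' : B.card = B'.card := by
    set ψ : (Fin n → Bool) → (Fin n → Bool) := fun σ i => if i = j₀ then !(σ i) else σ i with hψ
    have hψψ : ∀ σ, ψ (ψ σ) = σ := by
      intro σ; funext i; by_cases h : i = j₀ <;> simp [hψ, h]
    refine Finset.card_bij' (fun σ _ => ψ σ) (fun σ _ => ψ σ) ?_ ?_ ?_ ?_
    · intro σ hσ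
      simp only [hB, mem_filter, mem_univ, true_and] at hσ
      simp [hB', hψ, hσ]
    · intro σ hσ
      simp only [hB', mem_filter, mem_univ, true_and] at hσ
      simp only [hB, mem_filter, mem_univ, true_and, hψ, if_pos rfl]
      simp at hσ
      simp [hσ]
    · intro σ _; exact hψψ σ
    · intro σ _; exact hψψ σ
  have hBB' : B.card + B'.card = 2 ^ n := by
    rw [hB, hB', Finset.card_filter_add_card_filter_not]
    simp [Finset.card_univ]
  -- combine: 2^n ≤ 4 * T.card
  have hmain : (2:ℕ) ^ n ≤ 4 * T.card := by
    have h1 : 2 ^ n = 2 * B.card := by omega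
    have h2 : B.card ≤ A.card + A'.card :=
      le_trans (Finset.card_le_card hBAA') (Finset.card_union_le _ _)
    have h3 : A.card ≤ T.card := Finset.card_le_card hAT
    omega
  rw [div_le_div_iff₀ (by norm_num) (by positivity)]
  have : ((2:ℝ)) ^ n ≤ 4 * T.card := by exact_mod_cast hmain
  linarith
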